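/- The map σ ↦ α_P (with r ≥ 0, q > 0 fixed) is strictly decreasing on (0, ∞): ∂α_P/∂σ = −(1/σ³)[2r + (2r² + σ²(3r+2q))/(σ² ᾱ)] < 0, where ᾱ = sqrt((r/σ² + 1/2)² + 2(r+q)/σ²). -/

import Mathlib

/-!
Both terms of the bracket in the derivative are positive when `r ≥ 0` and `q > 0` (as `ᾱ > 0`),
so the derivative is negative on `(0, ∞)` and the mean value theorem gives strict monotonicity.
-/

open Real Set

noncomputable def alphaBar (r q σ : ℝ) : ℝ := √((r / σ ^ 2 + 1 / 2) ^ 2 + 2 * (r + q) / σ ^ 2)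

noncomputable def alphaP (r q σ : ℝ) : ℝ := alphaBar r q σ + r / σ ^ 2 - 1 / 2

variable {r q σ : ℝ}

lemma alphaBar_radicand_pos (hrq : 0 < r + q) (hσ : σ ≠ 0) :
    0 < (r / σ ^ 2 + 1 / 2) ^ 2 + 2 * (r + q) / σ ^ 2 := by
  positivity

lemma alphaBar_pos (hrq : 0 < r + q) (hσ : σ ≠ 0) : 0 < alphaBar r q σ :=
  sqrt_pos.2 (alphaBar_radicand_pos hrq hσ)

lemma hasDerivAt_div_sq (c : ℝ) (hσ : σ ≠ 0) :
    HasDerivAt (fun s : ℝ => c / s ^ 2) (-(2 * c / σ ^ 3)) σ := by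
  refine ((hasDerivAt_const σ c).div (hasDerivAt_pow 2 σ) (pow_ne_zero 2 hσ)).congr_deriv ?_
  field_simp
  ring

lemma hasDerivAt_alphaP (hrq : 0 < r + q) (hσ : σ ≠ 0) :
    HasDerivAt (alphaP r q)
      (-(1 / σ ^ 3) * (2 * r + (2 * r ^ 2 + σ ^ 2 * (3 * r + 2 * q)) / (σ ^ 2 * alphaBar r q σ)))
      σ := by
  have hradicand := ((hasDerivAt_div_sq r hσ).add_const (1 / 2)).pow 2 |>.add
    (hasDerivAt_div_sq (2 * (r + q)) hσ)
  have hsqrt := (hasDerivAt_sqrt (alphaBar_radicand_pos hrq hσ).ne').comp σ hradicand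
  refine ((hsqrt.add (hasDerivAt_div_sq r hσ)).sub_const (1 / 2)).congr_deriv ?_
  rw [← alphaBar.eq_1]
  have hbar_ne := (alphaBar_pos hrq hσ).ne'
  simp only [Nat.cast_ofNat, Nat.reduceSub, pow_one]
  field_simp
  ring

lemma alphaP_deriv_neg (hr : 0 ≤ r) (hq : 0 < q) (hσ : 0 < σ) :
    -(1 / σ ^ 3) * (2 * r + (2 * r ^ 2 + σ ^ 2 * (3 * r + 2 * q)) / (σ ^ 2 * alphaBar r q σ))
      < 0 := by
  have hnum : 0 < 2 * r ^ 2 + σ ^ 2 * (3 * r + 2 * q) :=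
    add_pos_of_nonneg_of_pos (by positivity) (mul_pos (pow_pos hσ 2) (by linarith))
  have hden : 0 < σ ^ 2 * alphaBar r q σ :=
    mul_pos (pow_pos hσ 2) (alphaBar_pos (by linarith) hσ.ne')
  rw [neg_mul, neg_neg_iff_pos]
  exact mul_pos (by positivity) (add_pos_of_nonneg_of_pos (by linarith) (div_pos hnum hden))

lemma strictAntiOn_alphaP (hr : 0 ≤ r) (hq : 0 < q) : StrictAntiOn (alphaP r q) (Ioi 0) := by
  have hrq : 0 < r + q := by linarith
  refine strictAntiOn_of_deriv_neg (convex_Ioi 0)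
    (fun σ hσ => (hasDerivAt_alphaP hrq (ne_of_gt hσ)).continuousAt.continuousWithinAt)
    fun σ hσ => ?_
  rw [interior_Ioi] at hσ
  rw [(hasDerivAt_alphaP hrq hσ.ne').deriv]
  exact alphaP_deriv_neg hr hq hσ

/-- The map σ ↦ α_P (r ≥ 0, q > 0 fixed) is strictly decreasing on (0, ∞):
∂α_P/∂σ = −(1/σ³)[2r + (2r² + σ²(3r+2q))/(σ² ᾱ)] < 0,
where ᾱ = sqrt((r/σ² + 1/2)² + 2(r+q)/σ²). -/
theorem ampo_alphaP_decreasing_in_sigma (r q σ : ℝ) (hr : 0 ≤ r) (hq : 0 < q) (hσ : 0 < σ)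
    (ᾱ : ℝ) (hᾱ : ᾱ = Real.sqrt ((r / σ ^ 2 + 1 / 2) ^ 2 + 2 * (r + q) / σ ^ 2)) :
    StrictAntiOn
      (fun σ' : ℝ =>
        Real.sqrt ((r / σ' ^ 2 + 1 / 2) ^ 2 + 2 * (r + q) / σ' ^ 2) + r / σ' ^ 2 - 1 / 2)
      (Set.Ioi 0) ∧
    HasDerivAt
      (fun σ' : ℝ =>
        Real.sqrt ((r / σ' ^ 2 + 1 / 2) ^ 2 + 2 * (r + q) / σ' ^ 2) + r / σ' ^ 2 - 1 / 2)
      (-(1 / σ ^ 3) * (2 * r + (2 * r ^ 2 + σ ^ 2 * (3 * r + 2 * q)) / (σ ^ 2 * ᾱ))) σ ∧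
    -(1 / σ ^ 3) * (2 * r + (2 * r ^ 2 + σ ^ 2 * (3 * r + 2 * q)) / (σ ^ 2 * ᾱ)) < 0 := by
  subst hᾱ
  exact ⟨strictAntiOn_alphaP hr hq, hasDerivAt_alphaP (by linarith) hσ.ne',
    alphaP_deriv_neg hr hq hσ⟩
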